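/- Let U ∈ ℂ^{m×m} be unitary, Q ⊆ {1,…,m}, P ⊆ {1,…,m}, and write Δ = ‖D_P U D_Q U*‖_{2→2}. Suppose Δ < 1, p ∈ range(U D_Q U*), n ∈ ℂ^m, and y = D_{P^c} p + n, where P^c is the complement of P. Then with L = (I − D_P U D_Q U*)^{-1} D_{P^c}, one has ‖L y − p‖₂ ≤ ‖D_{P^c} n‖₂ / (1 − Δ). -/

import Mathlib

open scoped BigOperators Matrix

noncomputable def vnorm2 {m : ℕ} (x : Fin m → ℂ) : ℝ :=
  Real.sqrt (∑ i, ‖x i‖ ^ 2)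

noncomputable def vnorm1 {m : ℕ} (x : Fin m → ℂ) : ℝ :=
  ∑ i, ‖x i‖

noncomputable def opnorm2 {m n : ℕ} (A : Matrix (Fin m) (Fin n) ℂ) : ℝ :=
  sSup {c | ∃ x : Fin n → ℂ, vnorm2 x = 1 ∧ c = vnorm2 (A.mulVec x)}

noncomputable def opnorm1 {m n : ℕ} (A : Matrix (Fin m) (Fin n) ℂ) : ℝ :=
  sSup {c | ∃ x : Fin n → ℂ, vnorm1 x = 1 ∧ c = vnorm1 (A.mulVec x)}

noncomputable def frobNorm {m n : ℕ} (A : Matrix (Fin m) (Fin n) ℂ) : ℝ :=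
  Real.sqrt (∑ i, ∑ j, ‖A i j‖ ^ 2)

def Dmat {m : ℕ} (P : Finset (Fin m)) : Matrix (Fin m) (Fin m) ℂ :=
  Matrix.diagonal (fun i => if i ∈ P then 1 else 0)

noncomputable def dft (m : ℕ) : Matrix (Fin m) (Fin m) ℂ :=
  fun k l => (1 / Real.sqrt m : ℝ) *
    Complex.exp (-2 * Real.pi * Complex.I * (k.1 + 1) * (l.1 + 1) / m)

/-!
Write `B = U D_Q U*` and `N = I - D_P B`. Since `U` is unitary, `B` is idempotent, so `B p = p`
and hence `D_{P^c} p = p - D_P B p = N p`. Therefore `L y - p = N⁻¹ D_{P^c} n`, and a vector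
`u = N⁻¹ w` satisfies `u = w + D_P B u`, so `‖u‖ ≤ ‖w‖ + Δ ‖u‖`, i.e. `‖u‖ ≤ ‖w‖ / (1 - Δ)`.
The same inequality with `w = 0` shows that `N` is invertible.
-/

section Norms

variable {m n : ℕ}

lemma vnorm2_eq_norm_toLp (x : Fin m → ℂ) : vnorm2 x = ‖WithLp.toLp 2 x‖ := by
  rw [EuclideanSpace.norm_eq, vnorm2]

lemma vnorm2_nonneg (x : Fin m → ℂ) : 0 ≤ vnorm2 x :=
  Real.sqrt_nonneg _

lemma vnorm2_eq_zero_iff {x : Fin m → ℂ} : vnorm2 x = 0 ↔ x = 0 := by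
  rw [vnorm2_eq_norm_toLp, norm_eq_zero, WithLp.toLp_eq_zero]

lemma vnorm2_add_le (x y : Fin m → ℂ) : vnorm2 (x + y) ≤ vnorm2 x + vnorm2 y := by
  simpa only [vnorm2_eq_norm_toLp, WithLp.toLp_add] using norm_add_le _ _

lemma vnorm2_smul (a : ℂ) (x : Fin m → ℂ) : vnorm2 (a • x) = ‖a‖ * vnorm2 x := by
  rw [vnorm2_eq_norm_toLp, vnorm2_eq_norm_toLp, WithLp.toLp_smul, norm_smul]

lemma opnorm2_bddAbove (A : Matrix (Fin m) (Fin n) ℂ) :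
    BddAbove {c | ∃ x : Fin n → ℂ, vnorm2 x = 1 ∧ c = vnorm2 (A *ᵥ x)} := by
  let f := LinearMap.toContinuousLinearMap (Matrix.toEuclideanLin A)
  refine ⟨‖f‖, ?_⟩
  rintro c ⟨x, hx, rfl⟩
  calc vnorm2 (A *ᵥ x) = ‖f (WithLp.toLp 2 x)‖ := vnorm2_eq_norm_toLp _
    _ ≤ ‖f‖ * ‖WithLp.toLp 2 x‖ := f.le_opNorm _
    _ = ‖f‖ := by rw [← vnorm2_eq_norm_toLp, hx, mul_one]

lemma opnorm2_nonneg (A : Matrix (Fin m) (Fin n) ℂ) : 0 ≤ opnorm2 A :=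
  Real.sSup_nonneg (by rintro c ⟨x, -, rfl⟩; exact vnorm2_nonneg _)

lemma vnorm2_mulVec_le (A : Matrix (Fin m) (Fin n) ℂ) (x : Fin n → ℂ) :
    vnorm2 (A *ᵥ x) ≤ opnorm2 A * vnorm2 x := by
  rcases (vnorm2_nonneg x).eq_or_lt with hx | hx
  · rw [← hx, vnorm2_eq_zero_iff.mp hx.symm, Matrix.mulVec_zero, mul_zero,
      vnorm2_eq_zero_iff.mpr rfl]
  -- Apply the definition of `opnorm2` to the unit vector `x / ‖x‖`.
  have hnorm : ‖((vnorm2 x : ℂ)⁻¹)‖ = (vnorm2 x)⁻¹ := by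
    rw [norm_inv, Complex.norm_real, Real.norm_of_nonneg hx.le]
  have hunit : vnorm2 ((vnorm2 x : ℂ)⁻¹ • x) = 1 := by
    rw [vnorm2_smul, hnorm, inv_mul_cancel₀ hx.ne']
  have hle := le_csSup (opnorm2_bddAbove A) ⟨_, hunit, rfl⟩
  rw [Matrix.mulVec_smul, vnorm2_smul, hnorm, inv_mul_le_iff₀ hx] at hle
  rwa [mul_comm] at hle

end Norms

section NeumannBound

variable {m : ℕ} {M : Matrix (Fin m) (Fin m) ℂ}

lemma vnorm2_le_of_eq_add_mulVec (hM : opnorm2 M < 1) {u w : Fin m → ℂ}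
    (hu : u = w + M *ᵥ u) : vnorm2 u ≤ vnorm2 w / (1 - opnorm2 M) := by
  have hle : vnorm2 u ≤ vnorm2 w + opnorm2 M * vnorm2 u :=
    calc vnorm2 u = vnorm2 (w + M *ᵥ u) := by rw [← hu]
      _ ≤ vnorm2 w + vnorm2 (M *ᵥ u) := vnorm2_add_le _ _
      _ ≤ vnorm2 w + opnorm2 M * vnorm2 u := by gcongr; exact vnorm2_mulVec_le M u
  rw [le_div_iff₀ (by linarith)]
  linarith

lemma isUnit_det_one_sub_of_opnorm2_lt_one (hM : opnorm2 M < 1) : IsUnit (1 - M).det := by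
  refine isUnit_iff_ne_zero.mpr fun hdet => ?_
  obtain ⟨v, hv, hNv⟩ := Matrix.exists_mulVec_eq_zero_iff.mpr hdet
  have hfix : v = 0 + M *ᵥ v := by
    rwa [Matrix.sub_mulVec, Matrix.one_mulVec, sub_eq_zero, ← zero_add (M *ᵥ v)] at hNv
  have hle := vnorm2_le_of_eq_add_mulVec hM hfix
  rw [vnorm2_eq_zero_iff.mpr rfl, zero_div] at hle
  exact hv (vnorm2_eq_zero_iff.mp (hle.antisymm (vnorm2_nonneg v)))

lemma vnorm2_inv_one_sub_mulVec_le (hM : opnorm2 M < 1) (w : Fin m → ℂ) :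
    vnorm2 ((1 - M)⁻¹ *ᵥ w) ≤ vnorm2 w / (1 - opnorm2 M) := by
  refine vnorm2_le_of_eq_add_mulVec hM ?_
  have hinv : (1 - M) *ᵥ ((1 - M)⁻¹ *ᵥ w) = w := by
    rw [Matrix.mulVec_mulVec, Matrix.mul_nonsing_inv _ (isUnit_det_one_sub_of_opnorm2_lt_one hM),
      Matrix.one_mulVec]
  rwa [Matrix.sub_mulVec, Matrix.one_mulVec, sub_eq_iff_eq_add] at hinv

end NeumannBound

section Projections

variable {m : ℕ}

lemma Dmat_mul_self (P : Finset (Fin m)) : Dmat P * Dmat P = Dmat P := by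
  rw [Dmat, Matrix.diagonal_mul_diagonal]
  congr 1
  funext i
  split_ifs <;> simp

lemma Dmat_compl (P : Finset (Fin m)) : Dmat Pᶜ = 1 - Dmat P := by
  rw [Dmat, Dmat, ← Matrix.diagonal_one, Matrix.diagonal_sub]
  congr 1
  funext i
  by_cases h : i ∈ P <;> simp [h]

lemma isIdempotentElem_mul_mul_conjTranspose {U D : Matrix (Fin m) (Fin m) ℂ}
    (hU : Uᴴ * U = 1) (hD : IsIdempotentElem D) : IsIdempotentElem (U * D * Uᴴ) := by
  calc U * D * Uᴴ * (U * D * Uᴴ) = U * (D * (Uᴴ * U) * D) * Uᴴ := by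
        simp only [Matrix.mul_assoc]
    _ = U * D * Uᴴ := by rw [hU, Matrix.mul_one, hD.eq, Matrix.mul_assoc]

lemma Dmat_compl_mulVec_of_mulVec_eq_self (P : Finset (Fin m)) {B : Matrix (Fin m) (Fin m) ℂ}
    {p : Fin m → ℂ} (hBp : B *ᵥ p = p) : Dmat Pᶜ *ᵥ p = (1 - Dmat P * B) *ᵥ p := by
  rw [Dmat_compl, Matrix.sub_mulVec, Matrix.sub_mulVec, ← Matrix.mulVec_mulVec, hBp]

end Projections

theorem stmt10 {m : ℕ} (U : Matrix (Fin m) (Fin m) ℂ)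
    (hU : U ∈ Matrix.unitaryGroup (Fin m) ℂ) (P Q : Finset (Fin m))
    (hΔ : opnorm2 (Dmat P * (U * Dmat Q * Uᴴ)) < 1)
    (p : Fin m → ℂ) (hp : ∃ z, p = (U * Dmat Q * Uᴴ).mulVec z)
    (nv : Fin m → ℂ) (y : Fin m → ℂ) (hy : y = (Dmat Pᶜ).mulVec p + nv) :
    vnorm2 (((1 - Dmat P * (U * Dmat Q * Uᴴ))⁻¹ * Dmat Pᶜ).mulVec y - p)
      ≤ vnorm2 ((Dmat Pᶜ).mulVec nv) / (1 - opnorm2 (Dmat P * (U * Dmat Q * Uᴴ))) := by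
  set B := U * Dmat Q * Uᴴ
  set N := 1 - Dmat P * B
  have hB : IsIdempotentElem B :=
    isIdempotentElem_mul_mul_conjTranspose hU.1 (Dmat_mul_self Q)
  have hBp : B *ᵥ p = p := by
    obtain ⟨z, rfl⟩ := hp
    rw [Matrix.mulVec_mulVec, hB.eq]
  have hN : IsUnit N.det := isUnit_det_one_sub_of_opnorm2_lt_one hΔ
  have hresidual : (N⁻¹ * Dmat Pᶜ) *ᵥ y - p = N⁻¹ *ᵥ (Dmat Pᶜ *ᵥ nv) := by
    rw [hy, ← Matrix.mulVec_mulVec, Matrix.mulVec_add, Matrix.mulVec_mulVec p,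
      Dmat_mul_self, Dmat_compl_mulVec_of_mulVec_eq_self P hBp, Matrix.mulVec_add,
      Matrix.mulVec_mulVec, Matrix.nonsing_inv_mul _ hN, Matrix.one_mulVec, add_sub_cancel_left]
  rw [hresidual]
  exact vnorm2_inv_one_sub_mulVec_le hΔ _
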